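/- arXiv:0902.2283 — 4 statements merged into one kernel-verified Lean document; each statement's English description precedes it below -/
import Mathlib

section
/- Let (I,II) be a Codazzi pair on a surface whose mean curvature H and extrinsic curvature K satisfy W(H,K)=0 for a differentiable function W with W_x(t,t²) + 2t·W_y(t,t²) ≠ 0 for all t. Then at every umbilical point p there is a neighborhood U and a continuous function h on U such that the Hopf differential coefficient Q (in a conformal parameter z) satisfies |Q_{z̄}| ≤ h|Q| on U. -/
open Complex

/-- The Wirtinger derivative `∂f/∂z`. -/
noncomputable def wz (f : ℂ → ℂ) (z : ℂ) : ℂ :=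
  (fderiv ℝ f z 1 - Complex.I * fderiv ℝ f z Complex.I) / 2

/-- The Wirtinger derivative `∂f/∂z̄`. -/
noncomputable def wzbar (f : ℂ → ℂ) (z : ℂ) : ℂ :=
  (fderiv ℝ f z 1 + Complex.I * fderiv ℝ f z Complex.I) / 2


open Metric Set

lemma lipb {E : Type*} [NormedAddCommGroup E] [NormedSpace ℝ E]
    (φ : ℂ → E) (hφ : ContDiff ℝ (⊤ : ℕ∞) φ) (p : ℂ) (δ : ℝ) :
    ∃ Lc : ℝ, 0 ≤ Lc ∧ ∀ z ∈ closedBall p δ, ∀ w ∈ closedBall p δ,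
      ‖φ w - φ z‖ ≤ Lc * ‖w - z‖ := by
  obtain ⟨C, hC⟩ := (isCompact_closedBall p δ).exists_bound_of_continuousOn
      ((hφ.continuous_fderiv (by simp)).continuousOn)
  refine ⟨max C 0, le_max_right _ _, ?_⟩
  intro z hz w hw
  exact (convex_closedBall p δ).norm_image_sub_le_of_norm_fderiv_le
    (fun x _ => (hφ.differentiable (by simp)).differentiableAt)
    (fun x hx => le_trans (hC x hx) (le_max_left _ _)) hz hw

lemma taylor2 (φ : ℂ → ℂ) (hφ : ContDiff ℝ (⊤ : ℕ∞) φ) (p : ℂ) (δ : ℝ) :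
    ∃ M : ℝ, 0 ≤ M ∧ ∀ z ∈ closedBall p δ, ∀ w ∈ closedBall p δ,
      ‖φ w - φ z - fderiv ℝ φ z (w - z)‖ ≤ M * ‖w - z‖ ^ 2 := by
  obtain ⟨M, hM0, hM⟩ := lipb (fderiv ℝ φ) (hφ.fderiv_right (by simp)) p (3 * δ)
  refine ⟨M, hM0, ?_⟩
  intro z hz w hw
  have hδ0 : 0 ≤ δ := by
    by_contra hneg
    exact (Metric.closedBall_eq_empty.mpr (by linarith)).subset hz
  have hwz : ‖w - z‖ ≤ 2 * δ := by
    rw [mem_closedBall] at hz hw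
    calc ‖w - z‖ = dist w z := (dist_eq_norm _ _).symm
      _ ≤ dist w p + dist p z := dist_triangle w p z
      _ ≤ δ + δ := by rw [dist_comm p z]; exact add_le_add hw hz
      _ = 2 * δ := by ring
  have hsub : closedBall z ‖w - z‖ ⊆ closedBall p (3 * δ) := by
    intro x hx
    rw [mem_closedBall] at hx ⊢
    rw [mem_closedBall] at hz
    calc dist x p ≤ dist x z + dist z p := dist_triangle x z p
      _ ≤ ‖w - z‖ + δ := add_le_add hx hz
      _ ≤ 2 * δ + δ := by linarith
      _ = 3 * δ := by ring
  have hzmem : z ∈ closedBall z ‖w - z‖ := mem_closedBall_self (norm_nonneg _)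
  have hwmem : w ∈ closedBall z ‖w - z‖ := by
    rw [mem_closedBall, dist_eq_norm]
  have key := (convex_closedBall z ‖w - z‖).norm_image_sub_le_of_norm_fderiv_le'
    (f := φ) (φ := fderiv ℝ φ z) (C := M * ‖w - z‖)
    (fun x _ => (hφ.differentiable (by simp)).differentiableAt)
    (fun x hx => by
      have h1 := hM z (hsub hzmem) x (hsub hx)
      have h2 : ‖x - z‖ ≤ ‖w - z‖ := by rw [← dist_eq_norm]; exact hx
      calc ‖fderiv ℝ φ x - fderiv ℝ φ z‖ ≤ M * ‖x - z‖ := h1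
        _ ≤ M * ‖w - z‖ := by nlinarith)
    hzmem hwmem
  calc ‖φ w - φ z - fderiv ℝ φ z (w - z)‖ ≤ M * ‖w - z‖ * ‖w - z‖ := key
    _ = M * ‖w - z‖ ^ 2 := by ring


lemma arithA (a b t c₀ cε C₁ u k gz : ℝ)
    (hc0def : c₀ = |a + 2 * t * b|) (hc0pos : 0 < c₀)
    (hcedef : cε = c₀ / (8 * (2 + 2 * |t|)))
    (hC1def : C₁ = 8 * (cε + |b|) / (3 * c₀))
    (hgz : 0 ≤ gz)
    (h1 : |u * a + k * b| ≤ cε * (|u| + |k|))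
    (h2 : |u| < 1) (h3 : |u| < c₀ / (2 * (|b| + 1)))
    (hk : k = u ^ 2 + 2 * t * u - gz) :
    |u| ≤ C₁ * gz := by
  have hcepos : 0 < cε := by rw [hcedef]; positivity
  set A : ℝ := a + b * (u + 2 * t) with hAdef
  have hA : c₀ / 2 ≤ |A| := by
    have e1 := abs_sub_abs_le_abs_sub (a + 2 * t * b) (-(b * u))
    have e2 : a + 2 * t * b - -(b * u) = A := by rw [hAdef]; ring
    rw [e2, abs_neg] at e1
    have e3 : |b * u| ≤ c₀ / 2 := by
      rw [abs_mul]
      have hb1 : |b| * |u| ≤ |b| * (c₀ / (2 * (|b| + 1))) :=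
        mul_le_mul_of_nonneg_left h3.le (abs_nonneg b)
      have hb2 : |b| * (c₀ / (2 * (|b| + 1))) ≤ c₀ / 2 := by
        rw [mul_div_assoc', div_le_div_iff₀ (by positivity) (by norm_num)]
        nlinarith [abs_nonneg b, hc0pos.le]
      linarith
    rw [← hc0def] at e1
    linarith
  have hAu : A * u = (u * a + k * b) + b * gz := by rw [hk, hAdef]; ring
  have hbg : |b * gz| = |b| * gz := by
    rw [abs_mul, _root_.abs_of_nonneg hgz]
  have e1 : |A * u| ≤ cε * (|u| + |k|) + |b| * gz := by
    calc |A * u| = |(u * a + k * b) + b * gz| := by rw [hAu]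
      _ ≤ |u * a + k * b| + |b * gz| := abs_add_le _ _
      _ ≤ cε * (|u| + |k|) + |b| * gz := by rw [hbg]; exact add_le_add h1 le_rfl
  have e2 : c₀ / 2 * |u| ≤ |A * u| := by
    rw [abs_mul]
    exact mul_le_mul_of_nonneg_right hA (abs_nonneg u)
  have hkb : |k| ≤ (1 + 2 * |t|) * |u| + gz := by
    have h4 : |k| ≤ |u ^ 2 + 2 * t * u| + gz := by
      rw [hk, sub_eq_add_neg]
      calc |u ^ 2 + 2 * t * u + -gz| ≤ |u ^ 2 + 2 * t * u| + |-gz| := abs_add_le _ _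
        _ = |u ^ 2 + 2 * t * u| + gz := by rw [abs_neg, _root_.abs_of_nonneg hgz]
    have h5 : |u ^ 2 + 2 * t * u| ≤ |u| ^ 2 + 2 * |t| * |u| := by
      calc |u ^ 2 + 2 * t * u| ≤ |u ^ 2| + |2 * t * u| := abs_add_le _ _
        _ = |u| ^ 2 + 2 * |t| * |u| := by
            rw [_root_.abs_pow, abs_mul, abs_mul]; norm_num
    nlinarith [abs_nonneg u]
  have e3 : cε * (|u| + |k|) ≤ c₀ / 8 * |u| + cε * gz := by
    have hce : cε * (2 + 2 * |t|) = c₀ / 8 := by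
      rw [hcedef]; field_simp
    nlinarith [abs_nonneg u, hcepos.le]
  have e4 : c₀ / 2 * |u| ≤ c₀ / 8 * |u| + (cε + |b|) * gz := by nlinarith
  rw [hC1def, div_mul_eq_mul_div, le_div_iff₀ (by positivity)]
  nlinarith [abs_nonneg u]

set_option maxHeartbeats 1000000 in
/-- **Local bound on `Q_z̄` for Weingarten–Codazzi pairs.**
In a local conformal parameter `z`, a Codazzi pair is written as
`I = 2λ|dz|²`, `II = Q dz² + 2λH|dz|² + Q̄ dz̄²`, the Codazzi equation reads
`Q_z̄ = λH_z` and `K = H² − |Q|²/λ²`.  If the pair satisfies a Weingarten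
relation `W(H,K) = 0` with `W_x(t,t²) + 2t·W_y(t,t²) ≠ 0` for all `t`, then
at every umbilical point `p` (i.e. `Q(p) = 0`) there is a neighborhood `U`
and a continuous function `h` on `U` with `|Q_z̄| ≤ h·|Q|` on `U`. -/
theorem stmt_5 (lam H : ℂ → ℝ) (Q : ℂ → ℂ) (K : ℂ → ℝ)
    (hlam : ∀ z, 0 < lam z)
    (hlamd : ContDiff ℝ (⊤ : ℕ∞) fun w => (lam w : ℂ))
    (hHd : ContDiff ℝ (⊤ : ℕ∞) fun w => (H w : ℂ))
    (hQd : ContDiff ℝ (⊤ : ℕ∞) Q)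
    -- the Codazzi equation and the expression of the extrinsic curvature
    (hCod : ∀ z, wzbar Q z = (lam z : ℂ) * wz (fun w => (H w : ℂ)) z)
    (hK : ∀ z, K z = H z ^ 2 - ‖Q z‖ ^ 2 / lam z ^ 2)
    -- the Weingarten relation W(H,K) = 0
    (W : ℝ × ℝ → ℝ) (hW : Differentiable ℝ W)
    (hrel : ∀ z, W (H z, K z) = 0)
    (hWcond : ∀ t : ℝ,
      fderiv ℝ W (t, t ^ 2) (1, 0) + 2 * t * fderiv ℝ W (t, t ^ 2) (0, 1) ≠ 0) :
    ∀ p : ℂ, Q p = 0 →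
      ∃ U ∈ nhds p, ∃ h : ℂ → ℝ, ContinuousOn h U ∧
        ∀ z ∈ U, ‖wzbar Q z‖ ≤ h z * ‖Q z‖ := by
  intro p hQp
  -- continuity facts
  have hHcont : Continuous H := by
    have : Continuous fun w => ((H w : ℂ)).re := Complex.continuous_re.comp hHd.continuous
    simpa using this
  have hlamcont : Continuous lam := by
    have : Continuous fun w => ((lam w : ℂ)).re := Complex.continuous_re.comp hlamd.continuous
    simpa using this
  have hQcont : Continuous Q := hQd.continuous
  set g : ℂ → ℝ := fun z => ‖Q z‖ ^ 2 / lam z ^ 2 with hgdef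
  have hgnn : ∀ z, 0 ≤ g z := fun z =>
    div_nonneg (by positivity) (by positivity)
  have hKcont : Continuous K := by
    have hgcont : Continuous g := by
      apply Continuous.div
      · exact (continuous_norm.comp hQcont).pow 2
      · exact hlamcont.pow 2
      · intro z; exact pow_ne_zero _ (ne_of_gt (hlam z))
    have : K = fun z => H z ^ 2 - g z := funext hK
    rw [this]; exact (hHcont.pow 2).sub hgcont
  set t : ℝ := H p with htdef
  set L := fderiv ℝ W (t, t ^ 2) with hLdef
  set a : ℝ := L (1, 0) with hadef
  set b : ℝ := L (0, 1) with hbdef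
  have hc0 : a + 2 * t * b ≠ 0 := hWcond t
  set c₀ : ℝ := |a + 2 * t * b| with hc0def
  have hc0pos : 0 < c₀ := abs_pos.mpr hc0
  set cε : ℝ := c₀ / (8 * (2 + 2 * |t|)) with hcedef
  have hcepos : 0 < cε := by
    apply div_pos hc0pos
    positivity
  set C₁ : ℝ := 8 * (cε + |b|) / (3 * c₀) with hC1def
  have hC1nn : 0 ≤ C₁ := by positivity
  have hKp : K p = t ^ 2 := by rw [hK p, hQp]; simp [htdef]
  have hLuk : ∀ u k : ℝ, L (u, k) = u * a + k * b := by
    intro u k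
    have huk : ((u, k) : ℝ × ℝ) = u • ((1:ℝ), (0:ℝ)) + k • ((0:ℝ), (1:ℝ)) := by
      simp [Prod.ext_iff]
    rw [huk, map_add, map_smul, map_smul, smul_eq_mul, smul_eq_mul, ← hadef, ← hbdef]
  -- Step A : pointwise estimate |H z - t| ≤ C₁ g z near p
  have hstepA : ∀ᶠ z in nhds p, |H z - t| ≤ C₁ * g z := by
    have hWd : HasFDerivAt W L (t, t ^ 2) := (hW _).hasFDerivAt
    have hWp : W (t, t ^ 2) = 0 := by rw [← hKp]; exact hrel p
    have hlo := Asymptotics.isLittleO_iff.mp hWd.isLittleO hcepos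
    have htend : Filter.Tendsto (fun z => (H z, K z)) (nhds p) (nhds (t, t ^ 2)) := by
      rw [← hKp]
      exact (hHcont.prodMk hKcont).tendsto p
    have hloz := htend.eventually hlo
    have htend2 : Filter.Tendsto (fun z => |H z - t|) (nhds p) (nhds 0) := by
      have : Continuous fun z => |H z - t| := (hHcont.sub continuous_const).abs
      have h0 : |H p - t| = 0 := by simp [htdef]
      simpa [h0] using this.tendsto p
    have hsm1 : ∀ᶠ z in nhds p, |H z - t| < 1 :=
      htend2.eventually (gt_mem_nhds one_pos)
    have hsm2 : ∀ᶠ z in nhds p, |H z - t| < c₀ / (2 * (|b| + 1)) :=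
      htend2.eventually (gt_mem_nhds (by positivity))
    filter_upwards [hloz, hsm1, hsm2] with z h1 h2 h3
    set u : ℝ := H z - t with hudef
    set k : ℝ := K z - t ^ 2 with hkdef
    have hk : k = u ^ 2 + 2 * t * u - g z := by
      rw [hkdef, hK z, hudef, hgdef]; ring
    have hsub : (H z, K z) - (t, t ^ 2) = (u, k) := by
      simp [Prod.ext_iff, hudef, hkdef]
    rw [hsub, hrel z, hWp, hLuk] at h1
    have hnorm : ‖((u, k) : ℝ × ℝ)‖ ≤ |u| + |k| := by
      rw [Prod.norm_def]
      simp only [Real.norm_eq_abs]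
      exact max_le (le_add_of_nonneg_right (abs_nonneg _))
        (le_add_of_nonneg_left (abs_nonneg _))
    have h1' : |u * a + k * b| ≤ cε * (|u| + |k|) := by
      have hL : (0 : ℝ) - 0 - (u * a + k * b) = -(u * a + k * b) := by ring
      rw [hL, Real.norm_eq_abs, abs_neg] at h1
      calc |u * a + k * b| ≤ cε * ‖((u, k) : ℝ × ℝ)‖ := h1
        _ ≤ cε * (|u| + |k|) := mul_le_mul_of_nonneg_left hnorm hcepos.le
    exact arithA a b t c₀ cε C₁ u k (g z) hc0def hc0pos hcedef hC1def (hgnn z)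
      h1' h2 h3 hk
  -- extract a ball for Step A
  obtain ⟨δ₁, hδ₁pos, hδ₁⟩ := Metric.eventually_nhds_iff.mp hstepA
  clear_value t L a b c₀ cε C₁
  set δ : ℝ := δ₁ / 2 with hδdef
  have hδpos : 0 < δ := by positivity
  set F : ℂ → ℂ := fun w => (H w : ℂ) with hFdef
  obtain ⟨M₂, hM₂0, hM₂⟩ := taylor2 F hHd p δ
  obtain ⟨LQ, hLQ0, hLQ⟩ := lipb Q hQd p δ
  obtain ⟨x₀, hx₀mem, hx₀min⟩ := (isCompact_closedBall p δ).exists_isMinOn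
      ⟨p, mem_closedBall_self hδpos.le⟩ hlamcont.continuousOn
  set m : ℝ := lam x₀ with hmdef
  have hmpos : 0 < m := hlam x₀
  have hmle : ∀ w ∈ closedBall p δ, m ≤ lam w := fun w hw => hx₀min hw
  have hQsm : ∀ᶠ z in nhds p, ‖Q z‖ < δ / 2 := by
    have htQ : Filter.Tendsto (fun z => ‖Q z‖) (nhds p) (nhds 0) := by
      have := hQcont.norm.tendsto p
      simpa [hQp] using this
    exact htQ.eventually (gt_mem_nhds (by positivity))
  obtain ⟨δ₃, hδ₃pos, hδ₃⟩ := Metric.eventually_nhds_iff.mp hQsm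
  set δ₂ : ℝ := min δ₃ (δ / 2) with hδ₂def
  have hδ₂pos : 0 < δ₂ := lt_min hδ₃pos (by positivity)
  set Mv : ℝ := C₁ * ((1 + LQ) ^ 2 + 1) / m ^ 2 + M₂ with hMvdef
  have hMvnn : 0 ≤ Mv := by positivity
  clear_value F m δ₂ Mv
  refine ⟨ball p δ₂, ball_mem_nhds p hδ₂pos, fun z => lam z * Mv,
    (hlamcont.mul continuous_const).continuousOn, ?_⟩
  intro z hz
  rw [mem_ball] at hz
  set qz : ℝ := ‖Q z‖ with hqzdef
  clear_value qz
  have hqz : qz < δ / 2 := by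
    rw [hqzdef]
    exact hδ₃ (lt_of_lt_of_le hz (by rw [hδ₂def]; exact min_le_left _ _))
  have hzd : dist z p ≤ δ / 2 :=
    le_trans hz.le (by rw [hδ₂def]; exact min_le_right _ _)
  have hzcb : z ∈ closedBall p δ := by
    rw [mem_closedBall]; linarith
  have hzδ₁ : dist z p < δ₁ := by
    rw [hδdef] at hzd; linarith
  -- core estimate
  have core : ∀ v : ℂ, ‖v‖ = 1 → ∀ r : ℝ, 0 < r → r ≤ δ / 2 →
      ‖fderiv ℝ F z v‖ * r ≤ C₁ * ((qz + LQ * r) ^ 2 + qz ^ 2) / m ^ 2 + M₂ * r ^ 2 := by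
    intro v hv r hr hrle
    set w : ℂ := z + (r : ℝ) • v with hwdef
    have hwz : w - z = (r : ℝ) • v := by rw [hwdef]; ring
    have hnwz : ‖w - z‖ = r := by
      rw [hwz, norm_smul, hv, Real.norm_eq_abs, _root_.abs_of_pos hr, mul_one]
    have hwcb : w ∈ closedBall p δ := by
      rw [mem_closedBall]
      calc dist w p ≤ dist w z + dist z p := dist_triangle w z p
        _ ≤ r + δ / 2 := by
            rw [dist_eq_norm, hnwz]; linarith
        _ ≤ δ := by linarith
    have hwδ₁ : dist w p < δ₁ := by
      have := mem_closedBall.mp hwcb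
      rw [hδdef] at this; linarith
    clear_value w
    have hT := hM₂ z hzcb w hwcb
    rw [hnwz] at hT
    have hds : fderiv ℝ F z (w - z) = (r : ℝ) • fderiv ℝ F z v := by
      rw [hwz]; exact (fderiv ℝ F z).map_smul r v
    have hnds : ‖fderiv ℝ F z (w - z)‖ = r * ‖fderiv ℝ F z v‖ := by
      rw [hds, norm_smul, Real.norm_eq_abs, _root_.abs_of_pos hr]
    have h6 : ‖fderiv ℝ F z (w - z)‖ ≤ ‖F w - F z‖ + M₂ * r ^ 2 := by
      have hsplit : fderiv ℝ F z (w - z)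
          = (F w - F z) - (F w - F z - fderiv ℝ F z (w - z)) := by ring
      calc ‖fderiv ℝ F z (w - z)‖
          = ‖(F w - F z) - (F w - F z - fderiv ℝ F z (w - z))‖ := by rw [← hsplit]
        _ ≤ ‖F w - F z‖ + ‖F w - F z - fderiv ℝ F z (w - z)‖ := norm_sub_le _ _
        _ ≤ ‖F w - F z‖ + M₂ * r ^ 2 := by linarith
    have hFH : ‖F w - F z‖ = |H w - H z| := by
      have hcast : F w - F z = ((H w - H z : ℝ) : ℂ) := by rw [hFdef]; push_cast; ring
      rw [hcast, Complex.norm_real, Real.norm_eq_abs]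
    have hu1 := hδ₁ hzδ₁
    have hu2 := hδ₁ hwδ₁
    have hHwz : |H w - H z| ≤ C₁ * (g w + g z) := by
      have htri : |H w - H z| ≤ |H w - t| + |H z - t| := by
        have hsp : H w - H z = (H w - t) + -(H z - t) := by ring
        calc |H w - H z| = |(H w - t) + -(H z - t)| := by rw [← hsp]
          _ ≤ |H w - t| + |-(H z - t)| := abs_add_le _ _
          _ = |H w - t| + |H z - t| := by rw [abs_neg]
      linarith
    have hgzb : g z ≤ qz ^ 2 / m ^ 2 := by
      have hgz' : g z = qz ^ 2 / lam z ^ 2 := by simp only [hgdef, hqzdef]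
      rw [hgz']
      apply div_le_div_of_nonneg_left (by positivity) (by positivity)
      exact pow_le_pow_left₀ hmpos.le (hmle z hzcb) 2
    have hQw : ‖Q w‖ ≤ qz + LQ * r := by
      have hlq := hLQ z hzcb w hwcb
      rw [hnwz] at hlq
      have : ‖Q w‖ ≤ ‖Q z‖ + ‖Q w - Q z‖ := by
        calc ‖Q w‖ = ‖Q z + (Q w - Q z)‖ := by ring_nf
          _ ≤ ‖Q z‖ + ‖Q w - Q z‖ := norm_add_le _ _
      rw [hqzdef]
      linarith
    have hgwb : g w ≤ (qz + LQ * r) ^ 2 / m ^ 2 := by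
      have hgw' : g w = ‖Q w‖ ^ 2 / lam w ^ 2 := by simp only [hgdef]
      rw [hgw']
      have hnum : ‖Q w‖ ^ 2 ≤ (qz + LQ * r) ^ 2 :=
        pow_le_pow_left₀ (norm_nonneg _) hQw 2
      have hden : m ^ 2 ≤ lam w ^ 2 := pow_le_pow_left₀ hmpos.le (hmle w hwcb) 2
      calc ‖Q w‖ ^ 2 / lam w ^ 2
          ≤ ‖Q w‖ ^ 2 / m ^ 2 := by
            apply div_le_div_of_nonneg_left (by positivity) (by positivity) hden
        _ ≤ (qz + LQ * r) ^ 2 / m ^ 2 := by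
            apply div_le_div_of_nonneg_right hnum (by positivity)
    calc ‖fderiv ℝ F z v‖ * r = ‖fderiv ℝ F z (w - z)‖ := by rw [hnds]; ring
      _ ≤ ‖F w - F z‖ + M₂ * r ^ 2 := h6
      _ = |H w - H z| + M₂ * r ^ 2 := by rw [hFH]
      _ ≤ C₁ * (g w + g z) + M₂ * r ^ 2 := by linarith
      _ ≤ C₁ * ((qz + LQ * r) ^ 2 / m ^ 2 + qz ^ 2 / m ^ 2) + M₂ * r ^ 2 := by
          have hmm := mul_le_mul_of_nonneg_left (add_le_add hgwb hgzb) hC1nn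
          linarith
      _ = C₁ * ((qz + LQ * r) ^ 2 + qz ^ 2) / m ^ 2 + M₂ * r ^ 2 := by ring
  -- from the core estimate to the derivative bound
  have hfv : ∀ v : ℂ, ‖v‖ = 1 → ‖fderiv ℝ F z v‖ ≤ Mv * qz := by
    intro v hv
    have hqznn : 0 ≤ qz := by rw [hqzdef]; exact norm_nonneg _
    rcases eq_or_lt_of_le hqznn with h0 | h0
    · have hqz0 : qz = 0 := h0.symm
      rw [hqz0, mul_zero]
      have hC : ∀ r : ℝ, 0 < r → r ≤ δ / 2 →
          ‖fderiv ℝ F z v‖ ≤ (C₁ * LQ ^ 2 / m ^ 2 + M₂) * r := by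
        intro r hr hrle
        have hcz := core v hv r hr hrle
        rw [hqz0] at hcz
        have hrw : C₁ * ((0 + LQ * r) ^ 2 + 0 ^ 2) / m ^ 2 + M₂ * r ^ 2
            = (C₁ * LQ ^ 2 / m ^ 2 + M₂) * r * r := by ring
        rw [hrw] at hcz
        exact le_of_mul_le_mul_right hcz hr
      have : ‖fderiv ℝ F z v‖ ≤ 0 := by
        refine le_of_forall_pos_le_add ?_
        intro ε hε
        set Cc : ℝ := C₁ * LQ ^ 2 / m ^ 2 + M₂ with hCcdef
        have hCc0 : 0 ≤ Cc := by positivity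
        set r : ℝ := min (δ / 2) (ε / (Cc + 1)) with hrdef
        have hr0 : 0 < r := lt_min (by positivity) (by positivity)
        clear_value Cc r
        have h5 := hC r hr0 (by rw [hrdef]; exact min_le_left _ _)
        have h7 : Cc * r ≤ Cc * (ε / (Cc + 1)) :=
          mul_le_mul_of_nonneg_left (by rw [hrdef]; exact min_le_right _ _) hCc0
        have h8 : Cc * (ε / (Cc + 1)) ≤ ε := by
          rw [mul_div_assoc', div_le_iff₀ (by positivity)]
          nlinarith
        rw [zero_add]
        linarith
      linarith [norm_nonneg (fderiv ℝ F z v)]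
    · have hrle : qz ≤ δ / 2 := hqz.le
      have hcz := core v hv qz h0 hrle
      have hrw : C₁ * ((qz + LQ * qz) ^ 2 + qz ^ 2) / m ^ 2 + M₂ * qz ^ 2
          = Mv * qz * qz := by rw [hMvdef]; ring
      rw [hrw] at hcz
      exact le_of_mul_le_mul_right hcz h0
  -- conclude
  have hwzF : ‖wz F z‖ ≤ Mv * qz := by
    have hb1 := hfv 1 (by simp)
    have hbI := hfv Complex.I (by simp)
    have hwzeq : wz F z = (fderiv ℝ F z 1 - Complex.I * fderiv ℝ F z Complex.I) / 2 := rfl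
    rw [hwzeq]
    calc ‖(fderiv ℝ F z 1 - Complex.I * fderiv ℝ F z Complex.I) / 2‖
        = ‖fderiv ℝ F z 1 - Complex.I * fderiv ℝ F z Complex.I‖ / 2 := by
          rw [norm_div]; norm_num
      _ ≤ (‖fderiv ℝ F z 1‖ + ‖Complex.I * fderiv ℝ F z Complex.I‖) / 2 := by
          have := norm_sub_le (fderiv ℝ F z 1) (Complex.I * fderiv ℝ F z Complex.I)
          linarith
      _ = (‖fderiv ℝ F z 1‖ + ‖fderiv ℝ F z Complex.I‖) / 2 := by
          rw [norm_mul, Complex.norm_I, one_mul]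
      _ ≤ (Mv * qz + Mv * qz) / 2 := by linarith
      _ = Mv * qz := by ring
  have hcodz := hCod z
  rw [hcodz, norm_mul, Complex.norm_real, Real.norm_eq_abs, _root_.abs_of_pos (hlam z)]
  calc lam z * ‖wz F z‖ ≤ lam z * (Mv * qz) :=
        mul_le_mul_of_nonneg_left hwzF (hlam z).le
    _ = lam z * Mv * qz := by ring
end

section
/- Let (I,II) be a fundamental pair on a surface with shape operator S and let S̃ = S − H·Id be the traceless part. In a local conformal parameter z with I = 2λ|dz|² and II = Q dz² + 2Hλ|dz|² + Q̄ dz̄², the Codazzi tensor of S̃ satisfies T_{S̃}(∂_z, ∂_z̄) = (1/λ)(Q̄_z ∂_z − Q_{z̄} ∂_z̄), and the Codazzi function satisfies |Q_{z̄}|² = λ·𝒯_{S̃}·|Q|² / (2(H²−K)) at points where H² ≠ K. -/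
open Complex

lemma wz_mul (f g : ℂ → ℂ) (z : ℂ) (hf : DifferentiableAt ℝ f z)
    (hg : DifferentiableAt ℝ g z) :
    wz (fun w => f w * g w) z = wz f z * g z + f z * wz g z := by
  simp only [wz, fderiv_fun_mul hf hg, ContinuousLinearMap.add_apply,
    ContinuousLinearMap.smul_apply, smul_eq_mul]
  ring

lemma wzbar_mul (f g : ℂ → ℂ) (z : ℂ) (hf : DifferentiableAt ℝ f z)
    (hg : DifferentiableAt ℝ g z) :
    wzbar (fun w => f w * g w) z = wzbar f z * g z + f z * wzbar g z := by
  simp only [wzbar, fderiv_fun_mul hf hg, ContinuousLinearMap.add_apply,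
    ContinuousLinearMap.smul_apply, smul_eq_mul]
  ring

lemma fderiv_conj_apply (Q : ℂ → ℂ) (z : ℂ) (h : DifferentiableAt ℝ Q z) (v : ℂ) :
    fderiv ℝ (fun w => (starRingEnd ℂ) (Q w)) z v = (starRingEnd ℂ) (fderiv ℝ Q z v) := by
  have h2 : fderiv ℝ (fun w => (starRingEnd ℂ) (Q w)) z
      = (Complex.conjCLE : ℂ →L[ℝ] ℂ).comp (fderiv ℝ Q z) := by
    have := fderiv_comp z (Complex.conjCLE.differentiableAt) h
    rw [Complex.conjCLE.fderiv] at this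
    exact this
  simp [h2]

lemma wz_conj (Q : ℂ → ℂ) (z : ℂ) (h : DifferentiableAt ℝ Q z) :
    wz (fun w => (starRingEnd ℂ) (Q w)) z = (starRingEnd ℂ) (wzbar Q z) := by
  simp only [wz, wzbar, fderiv_conj_apply Q z h, map_div₀, map_add, map_mul,
    Complex.conj_I, map_ofNat]
  ring

/-- **The Codazzi function of the traceless shape operator.**
Let `(I,II)` be a fundamental pair written in a local conformal parameter as
`I = 2λ|dz|²`, `II = Q dz² + 2Hλ|dz|² + Q̄ dz̄²`, with `K = H² − |Q|²/λ²`, and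
let `S̃ = S − H·Id`, so `S̃∂z = (Q/λ)∂z̄`, `S̃∂z̄ = (Q̄/λ)∂z`.  With the
Levi-Civita connection `∇_{∂z}∂z = (λ_z/λ)∂z`, `∇_{∂z}∂z̄ = 0`, the Codazzi
tensor `T_{S̃}(∂z,∂z̄) = ∇_{∂z}(S̃∂z̄) − ∇_{∂z̄}(S̃∂z)` has components
`T₁ = ∂z(Q̄/λ) + (Q̄/λ)(λ_z/λ)` along `∂z` and
`T₂ = −(∂z̄(Q/λ) + (Q/λ)(λ_z̄/λ))` along `∂z̄`.  Then
`T_{S̃}(∂z,∂z̄) = (1/λ)(Q̄_z ∂z − Q_z̄ ∂z̄)`, and the Codazzi function `𝒯`,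
defined by `I(T,T) = 𝒯·(I(∂z,∂z)I(∂z̄,∂z̄) − I(∂z,∂z̄)²) = −𝒯λ²`, satisfies
`|Q_z̄|² = λ𝒯|Q|²/(2(H²−K))` wherever `H² ≠ K`. -/
theorem stmt_12 (lam H : ℂ → ℝ) (Q : ℂ → ℂ) (K 𝒯 : ℂ → ℝ)
    (hlam : ∀ z, 0 < lam z)
    (hlamd : Differentiable ℝ fun w => (lam w : ℂ))
    (hQd : Differentiable ℝ Q)
    (hK : ∀ z, K z = H z ^ 2 - ‖Q z‖ ^ 2 / lam z ^ 2)
    (T₁ T₂ : ℂ → ℂ)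
    (hT₁ : ∀ z, T₁ z = wz (fun w => (starRingEnd ℂ) (Q w) / (lam w : ℂ)) z
      + ((starRingEnd ℂ) (Q z) / (lam z : ℂ)) *
          (wz (fun w => (lam w : ℂ)) z / (lam z : ℂ)))
    (hT₂ : ∀ z, T₂ z = -(wzbar (fun w => Q w / (lam w : ℂ)) z
      + (Q z / (lam z : ℂ)) * (wzbar (fun w => (lam w : ℂ)) z / (lam z : ℂ))))
    -- the defining identity of the Codazzi function
    (h𝒯 : ∀ z, 2 * T₁ z * T₂ z * (lam z : ℂ) = -((𝒯 z : ℝ) : ℂ) * (lam z : ℂ) ^ 2) :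
    (∀ z, T₁ z = wz (fun w => (starRingEnd ℂ) (Q w)) z / (lam z : ℂ) ∧
          T₂ z = - wzbar Q z / (lam z : ℂ)) ∧
    (∀ z, H z ^ 2 ≠ K z →
      ‖wzbar Q z‖ ^ 2
        = lam z * 𝒯 z * ‖Q z‖ ^ 2 / (2 * (H z ^ 2 - K z))) := by
  have hlne : ∀ z, ((lam z : ℂ)) ≠ 0 := fun z => by
    exact_mod_cast (hlam z).ne'
  -- differentiability of the quotients
  have hdconjQ : Differentiable ℝ fun w => (starRingEnd ℂ) (Q w) :=
    Complex.conjCLE.differentiable.comp hQd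
  have hdinv : ∀ z, DifferentiableAt ℝ (fun w => ((lam w : ℂ))⁻¹) z := fun z =>
    (hlamd z).inv (hlne z)
  have hd1 : ∀ z, DifferentiableAt ℝ (fun w => (starRingEnd ℂ) (Q w) / (lam w : ℂ)) z := by
    intro z
    simp only [div_eq_mul_inv]
    exact (hdconjQ z).mul (hdinv z)
  have hd2 : ∀ z, DifferentiableAt ℝ (fun w => Q w / (lam w : ℂ)) z := by
    intro z
    simp only [div_eq_mul_inv]
    exact (hQd z).mul (hdinv z)
  -- part 1
  have part1 : ∀ z, T₁ z = wz (fun w => (starRingEnd ℂ) (Q w)) z / (lam z : ℂ) ∧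
      T₂ z = - wzbar Q z / (lam z : ℂ) := by
    intro z
    constructor
    · have hprod := wz_mul (fun w => (starRingEnd ℂ) (Q w) / (lam w : ℂ))
        (fun w => (lam w : ℂ)) z (hd1 z) (hlamd z)
      have hfun : (fun w => (starRingEnd ℂ) (Q w) / (lam w : ℂ) * (lam w : ℂ))
          = fun w => (starRingEnd ℂ) (Q w) := by
        funext w
        exact div_mul_cancel₀ _ (hlne w)
      rw [hfun] at hprod
      rw [hT₁ z]
      rw [hprod]
      field_simp [hlne z]
    · have hprod := wzbar_mul (fun w => Q w / (lam w : ℂ))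
        (fun w => (lam w : ℂ)) z (hd2 z) (hlamd z)
      have hfun : (fun w => Q w / (lam w : ℂ) * (lam w : ℂ)) = Q := by
        funext w
        exact div_mul_cancel₀ _ (hlne w)
      rw [hfun] at hprod
      rw [hT₂ z]
      rw [hprod]
      field_simp [hlne z]
  refine ⟨part1, ?_⟩
  intro z hz
  -- key complex identity
  have e1 := h𝒯 z
  rw [(part1 z).1, (part1 z).2, wz_conj Q z (hQd z)] at e1
  -- e1 : 2 * (conj a / λ) * (-a / λ) * λ = -𝒯 λ²
  set a := wzbar Q z with ha
  have key : ((‖a‖ ^ 2 : ℝ) : ℂ) = ((𝒯 z * lam z ^ 3 / 2 : ℝ) : ℂ) := by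
    have habs : (starRingEnd ℂ) a * a = ((‖a‖ ^ 2 : ℝ) : ℂ) := by
      rw [mul_comm, Complex.mul_conj]
      norm_cast
      exact (Complex.sq_norm a).symm
    have e2 : (starRingEnd ℂ) a * a = ((𝒯 z : ℝ) : ℂ) * (lam z : ℂ) ^ 3 / 2 := by
      field_simp [hlne z] at e1
      have e1' : (2 * (starRingEnd ℂ) a * a) * (lam z : ℂ)
          = (((𝒯 z : ℝ) : ℂ) * (lam z : ℂ) ^ 3) * (lam z : ℂ) := by
        linear_combination (-(lam z : ℂ)) * e1
      have e2' := mul_right_cancel₀ (hlne z) e1'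
      linear_combination e2' / 2
    rw [← habs]
    rw [e2]
    push_cast
    ring
  have keyR : ‖a‖ ^ 2 = 𝒯 z * lam z ^ 3 / 2 := by
    exact_mod_cast key
  -- now deal with H² - K
  have hHK : H z ^ 2 - K z = ‖Q z‖ ^ 2 / lam z ^ 2 := by
    rw [hK z]; ring
  have hQne : ‖Q z‖ ≠ 0 := by
    intro h0
    apply hz
    rw [hK z, h0]
    simp
  rw [hHK, keyR]
  have hl := (hlam z).ne'
  field_simp
end

section
/- Let (I,II) be a Codazzi pair on a surface Σ with mean curvature H and extrinsic curvature K, II' = II − H·I its traceless part, and φ a smooth function on Σ such that sinh(φ)/√(H²−K) extends smoothly to Σ. Define A = cosh(φ)·I + (sinh(φ)/√(H²−K))·II' and B = √(H²−K)·sinh(φ)·I + cosh(φ)·II'. Then A is a Riemannian metric, the pair (A,B) has mean curvature H(A,B) = 0 and extrinsic curvature K(A,B) = −(H²−K). -/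
open scoped RealInnerProductSpace

set_option maxHeartbeats 1000000 in
/-- **The pair `(A,B)` associated to a Codazzi pair (pointwise version).**
Pointwise on a 2-dimensional real inner product space: let `S` be a
self-adjoint endomorphism with half-trace `H` and determinant `K`, and write
`I(v,w) = ⟪v,w⟫`, `II'(v,w) = ⟪Sv,w⟫ − H⟪v,w⟫` for the traceless part of
`II`.  Let `φ, ψ` be reals with `ψ·√(H²−K) = sinh φ` (so `ψ` is the smoothly
extended value of `sinh φ/√(H²−K)`), and set
`A = cosh φ·I + ψ·II'`, `B = √(H²−K)·sinh φ·I + cosh φ·II'`.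
Then `A` is positive definite (a Riemannian metric) and the pair `(A,B)` has
mean curvature `0` and extrinsic curvature `−(H²−K)`: its shape operator `T`
(with `A(Tv,w) = B(v,w)`) has trace `0` and determinant `−(H²−K)`. -/
theorem stmt_14 {V : Type*} [NormedAddCommGroup V] [InnerProductSpace ℝ V]
    [FiniteDimensional ℝ V] (hdim : Module.finrank ℝ V = 2)
    (S : V →ₗ[ℝ] V) (hS : LinearMap.IsSymmetric S)
    (H K : ℝ)
    (hH : LinearMap.trace ℝ V S = 2 * H) (hK : LinearMap.det S = K)
    (φ ψ : ℝ) (hψ : ψ * Real.sqrt (H ^ 2 - K) = Real.sinh φ)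
    (A B : V → V → ℝ)
    (hA : ∀ v w, A v w = Real.cosh φ * ⟪v, w⟫ + ψ * (⟪S v, w⟫ - H * ⟪v, w⟫))
    (hB : ∀ v w, B v w = Real.sqrt (H ^ 2 - K) * Real.sinh φ * ⟪v, w⟫
      + Real.cosh φ * (⟪S v, w⟫ - H * ⟪v, w⟫)) :
    (∀ v : V, v ≠ 0 → 0 < A v v) ∧
    ∃ T : V →ₗ[ℝ] V, (∀ v w, A (T v) w = B v w) ∧
      LinearMap.trace ℝ V T = 0 ∧ LinearMap.det T = -(H ^ 2 - K) := by
  set b := hS.eigenvectorBasis hdim with hb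
  set μ := hS.eigenvalues hdim with hμdef
  have happ : ∀ i, S (b i) = μ i • b i := fun i =>
    hS.apply_eigenvectorBasis hdim i
  have hortho : ∀ i j : Fin 2, ⟪b i, b j⟫ = if i = j then 1 else 0 := by
    intro i j
    simpa using orthonormal_iff_ite.mp b.orthonormal i j
  have hM : LinearMap.toMatrix b.toBasis b.toBasis S = Matrix.diagonal μ := by
    ext i j
    rw [LinearMap.toMatrix_apply]
    simp only [OrthonormalBasis.coe_toBasis, happ, map_smul, Module.Basis.repr_self]
    rw [Matrix.diagonal_apply]
    simp [Finsupp.single_apply]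
    split_ifs with h
    · rw [h]
    · simp
  have hsum : μ 0 + μ 1 = 2 * H := by
    have := LinearMap.trace_eq_matrix_trace ℝ b.toBasis S
    rw [hM, hH] at this
    simpa [Matrix.trace, Fin.sum_univ_two] using this.symm
  have hprod : μ 0 * μ 1 = K := by
    have := LinearMap.det_toMatrix b.toBasis S
    rw [hM, hK] at this
    simpa [Matrix.det_diagonal, Fin.prod_univ_two] using this
  clear_value b μ
  have hHK : H ^ 2 - K = (μ 0 - H) ^ 2 := by
    have h1 : μ 1 = 2 * H - μ 0 := by linarith
    rw [← hprod, h1]; ring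
  have hsqrt : Real.sqrt (H ^ 2 - K) = |μ 0 - H| := by
    rw [hHK, Real.sqrt_sq_eq_abs]
  have hψ' : ψ * |μ 0 - H| = Real.sinh φ := by rw [← hsqrt]; exact hψ
  have hμ1 : μ 1 - H = -(μ 0 - H) := by linarith
  have habs : ∀ i, |μ i - H| = |μ 0 - H| := by
    intro i
    fin_cases i
    · rfl
    · show |μ 1 - H| = _
      rw [hμ1, abs_neg]
  have hsc : |Real.sinh φ| < Real.cosh φ := by
    nlinarith [Real.cosh_sq φ, Real.cosh_pos φ, abs_nonneg (Real.sinh φ),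
      sq_abs (Real.sinh φ)]
  have hc : ∀ i, 0 < Real.cosh φ + ψ * (μ i - H) := by
    intro i
    have h2 : |ψ * (μ i - H)| = |Real.sinh φ| := by
      rw [abs_mul, habs i, ← abs_abs (μ 0 - H), ← abs_mul, hψ']
    have h3 := neg_abs_le (ψ * (μ i - H))
    rw [h2] at h3
    linarith
  constructor
  · intro v hv
    set x : Fin 2 → ℝ := fun i => b.repr v i with hx
    have hvsum : v = x 0 • b 0 + x 1 • b 1 := by
      have := b.sum_repr v
      rw [Fin.sum_univ_two] at this
      exact this.symm
    clear_value x
    have hxne : x 0 ≠ 0 ∨ x 1 ≠ 0 := by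
      by_contra h
      push_neg at h
      exact hv (by rw [hvsum, h.1, h.2]; simp)
    have hvv : ⟪v, v⟫ = x 0 ^ 2 + x 1 ^ 2 := by
      conv_lhs => rw [hvsum]
      simp [-inner_self_eq_norm_sq_to_K, inner_add_left, inner_add_right, real_inner_smul_left,
        real_inner_smul_right, hortho]
      ring
    have hSvv : ⟪S v, v⟫ = μ 0 * x 0 ^ 2 + μ 1 * x 1 ^ 2 := by
      conv_lhs => rw [hvsum]
      simp [map_add, map_smul, happ, inner_add_left, inner_add_right,
        real_inner_smul_left, real_inner_smul_right, hortho]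
      ring
    rw [hA, hvv, hSvv]
    have h0 := hc 0
    have h1 := hc 1
    have hxpos : 0 < x 0 ^ 2 + x 1 ^ 2 := by
      rcases hxne with h | h
      · positivity
      · positivity
    rcases hxne with hne | hne
    · nlinarith [mul_pos h0 (pow_pos (abs_pos.mpr hne) 2), sq_abs (x 0),
        mul_nonneg h1.le (sq_nonneg (x 1))]
    · nlinarith [mul_pos h1 (pow_pos (abs_pos.mpr hne) 2), sq_abs (x 1),
        mul_nonneg h0.le (sq_nonneg (x 0))]
  · refine ⟨S - H • LinearMap.id, ?_, ?_, ?_⟩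
    · -- A (T v) w = B v w
      have hchar : ∀ i, μ i * μ i = 2 * H * μ i - K := by
        intro i
        fin_cases i
        · show μ 0 * μ 0 = 2 * H * μ 0 - K
          have h1 : μ 1 = 2 * H - μ 0 := by linarith
          rw [← hprod, h1]; ring
        · show μ 1 * μ 1 = 2 * H * μ 1 - K
          have h1 : μ 0 = 2 * H - μ 1 := by linarith
          rw [← hprod, h1]; ring
      have hCH : ∀ v : V, S (S v) = (2 * H) • S v - K • v := by
        have heq : S ∘ₗ S = (2 * H) • S - K • LinearMap.id := by
          apply b.toBasis.ext
          intro i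
          rw [LinearMap.comp_apply, OrthonormalBasis.coe_toBasis, happ, map_smul,
            happ, LinearMap.sub_apply, LinearMap.smul_apply, LinearMap.smul_apply,
            LinearMap.id_apply, happ, smul_smul, smul_smul, ← sub_smul]
          congr 1
          rw [hchar i]
        intro v
        simpa using LinearMap.congr_fun heq v
      have hK0 : 0 ≤ H ^ 2 - K := by rw [hHK]; positivity
      have hψK : ψ * (H ^ 2 - K) = Real.sqrt (H ^ 2 - K) * Real.sinh φ := by
        conv_lhs => rw [← Real.mul_self_sqrt hK0]
        rw [← hψ]; ring
      intro v w
      rw [hA, hB]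
      have h1 : S (S v - H • v) = H • S v - K • v := by
        rw [map_sub, map_smul, hCH v]
        module
      simp only [LinearMap.sub_apply, LinearMap.smul_apply, LinearMap.id_apply, h1,
        inner_sub_left, real_inner_smul_left]
      linear_combination (⟪v, w⟫ : ℝ) * hψK
    · have h : LinearMap.trace ℝ V (S - H • LinearMap.id) =
          LinearMap.trace ℝ V S - H • LinearMap.trace ℝ V LinearMap.id := by
        simp [map_sub, map_smul]
      rw [h, hH, LinearMap.trace_id, hdim]
      rw [smul_eq_mul]
      push_cast
      ring
    · have hMT : LinearMap.toMatrix b.toBasis b.toBasis (S - H • LinearMap.id)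
          = Matrix.diagonal (fun i => μ i - H) := by
        ext i j
        rw [LinearMap.toMatrix_apply]
        simp only [LinearMap.sub_apply, LinearMap.smul_apply, LinearMap.id_apply,
          OrthonormalBasis.coe_toBasis, happ, map_sub, map_smul, Module.Basis.repr_self,
          Finsupp.coe_sub, Finsupp.coe_smul, Pi.sub_apply, Pi.smul_apply]
        rw [Matrix.diagonal_apply]
        simp [Finsupp.single_apply]
        split_ifs with h
        · rw [h]
        · simp
      have hdet := LinearMap.det_toMatrix b.toBasis (S - H • LinearMap.id)
      rw [hMT] at hdet
      rw [← hdet, Matrix.det_diagonal, Fin.prod_univ_two, hμ1, hHK]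
      ring
end

section
/- Let (I,II) be a Codazzi pair on a surface Σ satisfying the elliptic Weingarten relation H = f(H²−K) with f differentiable on [0,a), 4t f'(t)² < 1 on [0,a), and suppose H² − K ≥ c₀ > 0 on Σ and I is complete. Let A be the Bryant-type metric of the pair (with φ(t)=∫₀ᵗ 2f'(s²)ds) and Q its holomorphic Hopf differential, so that 2|Q| = t·A with t = √(H²−K). Then the flat metric g₀ = √(H²−K)·A satisfies I ≤ 2c₂·g₀ for some constant c₂ > 0, and hence g₀ is a complete flat metric on Σ. -/
/-- **Completeness of the flat metric `g₀ = √(H²−K)·A` (Lemma 5.2).**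
Let `(I,II)` be an elliptic special Weingarten pair (`H = f(H²−K)` with
`4t f'(t)² < 1`) on a surface `Σ` with `H² − K = t² ≥ c₀ > 0` and `I`
complete.  Let `A` be the Bryant-type metric with associated function
`φ(t) = ∫₀ᵗ 2f'(s²) ds`, and let `Qre` be the real quadratic form
`Q dz² + Q̄ dz̄²` of the holomorphic Hopf differential `Q` of `(A,B)`, so that
`|Qre| ≤ 2|Q| = t·A` and `I = cosh φ(t)·A − (sinh φ(t)/t)·Qre`.
Then, with `g₀ = t·A`, there is a constant `c₂ > 0` such that `I ≤ 2c₂·g₀`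
as quadratic forms, and hence (the distances being obtained from lengths of
curves, so that a quadratic-form comparison `I ≤ c·g₀` yields
`dist_I ≤ √c·dist_{g₀}`) the metric `g₀` is complete. -/
theorem stmt_19 (M : Type*) (a c₀ : ℝ) (ha : 0 < a) (hc₀ : 0 < c₀)
    (f : ℝ → ℝ) (hf : ContDiffOn ℝ 1 f (Set.Ico 0 a))
    (hell : ∀ s ∈ Set.Ico (0 : ℝ) a, 4 * s * (deriv f s) ^ 2 < 1)
    (φ : ℝ → ℝ)
    (hφ : ∀ u : ℝ, φ u = ∫ s in (0 : ℝ)..u, 2 * deriv f (s ^ 2))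
    -- the quadratic forms I, A, Qre, g₀ and the function t = √(H²−K)
    (Iq A Qre g₀ : M → EuclideanSpace ℝ (Fin 2) → ℝ)
    (t : M → ℝ)
    (htpos : ∀ p, 0 < t p)
    (ht : ∀ p, c₀ ≤ t p ^ 2) (hta : ∀ p, t p ^ 2 < a)
    (hApos : ∀ p v, 0 ≤ A p v)
    -- `2|Q| = t·A` at the level of quadratic forms
    (hQbound : ∀ p v, |Qre p v| ≤ t p * A p v)
    -- the representation of I in terms of A and the Hopf differential
    (hrep : ∀ p v, Iq p v
      = Real.cosh (φ (t p)) * A p v - (Real.sinh (φ (t p)) / t p) * Qre p v)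
    (hg₀ : ∀ p v, g₀ p v = t p * A p v)
    -- the Riemannian distances of I and g₀
    (mI mg : MetricSpace M)
    (hcompat : ∀ c : ℝ, 0 < c → (∀ p v, Iq p v ≤ c * g₀ p v) →
      ∀ x y : M, mI.toDist.dist x y ≤ Real.sqrt c * mg.toDist.dist x y)
    (htop : mI.toUniformSpace.toTopologicalSpace
          = mg.toUniformSpace.toTopologicalSpace)
    -- I is complete
    (hIcomplete : @CompleteSpace M mI.toUniformSpace) :
    (∃ c₂ > 0, ∀ p v, Iq p v ≤ 2 * c₂ * g₀ p v) ∧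
    @CompleteSpace M mg.toUniformSpace := by
  set s₀ := Real.sqrt c₀ with hs₀def
  have hs₀ : 0 < s₀ := Real.sqrt_pos.mpr hc₀
  set g : ℝ → ℝ := fun s => 2 * deriv f (s ^ 2) with hgdef
  have hmeas : Measurable g := ((measurable_deriv f).comp (measurable_id.pow_const 2)).const_mul 2
  have hts : ∀ p, s₀ ≤ t p := by
    intro p
    calc s₀ ≤ Real.sqrt (t p ^ 2) := Real.sqrt_le_sqrt (ht p)
    _ = t p := Real.sqrt_sq (htpos p).le
  have htub : ∀ p, t p ≤ Real.sqrt a := by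
    intro p
    calc t p = Real.sqrt (t p ^ 2) := (Real.sqrt_sq (htpos p).le).symm
    _ ≤ Real.sqrt a := Real.sqrt_le_sqrt (hta p).le
  -- pointwise bound on g on (s₀, t p]
  have hgbd : ∀ p, ∀ s ∈ Set.uIoc s₀ (t p), ‖g s‖ ≤ 1 / s₀ := by
    intro p s hs
    rw [Set.uIoc_of_le (hts p)] at hs
    obtain ⟨hs1, hs2⟩ := hs
    have hspos : 0 < s := hs₀.trans hs1
    have hs2a : s ^ 2 < a := by
      have h : s ^ 2 ≤ t p ^ 2 := by nlinarith [htpos p]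
      linarith [hta p]
    have hd := hell (s ^ 2) ⟨by positivity, hs2a⟩
    have h1 : (2 * s * deriv f (s ^ 2)) ^ 2 < 1 := by nlinarith
    have h2 : |2 * s * deriv f (s ^ 2)| < 1 := (sq_lt_one_iff_abs_lt_one _).mp h1
    have h3 : |g s| * s < 1 := by
      calc |g s| * s = |g s| * |s| := by rw [abs_of_pos hspos]
      _ = |g s * s| := (abs_mul _ _).symm
      _ = |2 * s * deriv f (s ^ 2)| := by rw [hgdef]; ring_nf
      _ < 1 := h2
    have h4 : |g s| ≤ 1 / s := by
      rw [le_div_iff₀ hspos]; exact h3.le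
    calc ‖g s‖ = |g s| := rfl
    _ ≤ 1 / s := h4
    _ ≤ 1 / s₀ := one_div_le_one_div_of_le hs₀ hs1.le
  -- uniform bound on φ (t p)
  set B : ℝ := |φ s₀| + Real.sqrt a / s₀ with hBdef
  have hBnn : 0 ≤ B := by positivity
  have hφbd : ∀ p, |φ (t p)| ≤ B := by
    intro p
    have hint2 : IntervalIntegrable g MeasureTheory.volume s₀ (t p) := by
      apply IntervalIntegrable.mono_fun' (g := fun _ => 1 / s₀) intervalIntegrable_const
      · exact (hmeas.aestronglyMeasurable).restrict
      · exact MeasureTheory.ae_restrict_of_forall_mem measurableSet_uIoc (hgbd p)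
    by_cases hint : IntervalIntegrable g MeasureTheory.volume 0 s₀
    · have hsplit : φ s₀ + ∫ s in s₀..(t p), g s = φ (t p) := by
        rw [hφ, hφ]
        exact intervalIntegral.integral_add_adjacent_intervals hint hint2
      have hmid : |∫ s in s₀..(t p), g s| ≤ (1 / s₀) * |t p - s₀| := by
        exact intervalIntegral.norm_integral_le_of_norm_le_const (hgbd p)
      have h5 : |t p - s₀| ≤ Real.sqrt a := by
        rw [abs_of_nonneg (by linarith [hts p])]
        have := htub p
        linarith [hs₀]
      calc |φ (t p)| = |φ s₀ + ∫ s in s₀..(t p), g s| := by rw [hsplit]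
      _ ≤ |φ s₀| + |∫ s in s₀..(t p), g s| := abs_add_le _ _
      _ ≤ |φ s₀| + (1 / s₀) * Real.sqrt a := by
          have := hmid.trans (by
            have : (1 / s₀) * |t p - s₀| ≤ (1 / s₀) * Real.sqrt a :=
              mul_le_mul_of_nonneg_left h5 (by positivity)
            exact this)
          linarith
      _ = B := by rw [hBdef]; ring
    · have hnot : ¬ IntervalIntegrable g MeasureTheory.volume 0 (t p) := by
        intro hI
        exact hint (hI.mono_set (by
          rw [Set.uIcc_of_le hs₀.le, Set.uIcc_of_le (hs₀.trans_le (hts p)).le]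
          exact Set.Icc_subset_Icc le_rfl (hts p)))
      have : φ (t p) = 0 := by rw [hφ]; exact intervalIntegral.integral_undef hnot
      rw [this, abs_zero]; exact hBnn
  -- the constant
  set c₂ : ℝ := Real.cosh B / s₀ with hc₂def
  have hc₂pos : 0 < c₂ := div_pos (Real.cosh_pos B) hs₀
  have hmain : ∀ p v, Iq p v ≤ 2 * c₂ * g₀ p v := by
    intro p v
    set x := φ (t p)
    have hu : 0 < t p := htpos p
    have hcx : Real.cosh x ≤ Real.cosh B :=
      Real.cosh_le_cosh.mpr (by rw [abs_of_nonneg hBnn]; exact hφbd p)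
    have hsx : |Real.sinh x| ≤ Real.cosh B := by
      calc |Real.sinh x| = Real.sinh |x| := Real.abs_sinh x
      _ ≤ Real.sinh B := Real.sinh_le_sinh.mpr (hφbd p)
      _ ≤ Real.cosh B := (Real.sinh_lt_cosh B).le
    have h1 : -(Real.sinh x / t p) * Qre p v ≤ |Real.sinh x| * A p v := by
      calc -(Real.sinh x / t p) * Qre p v ≤ |(Real.sinh x / t p) * Qre p v| := by
            rw [abs_mul]; nlinarith [abs_nonneg (Real.sinh x / t p), abs_nonneg (Qre p v),
              neg_abs_le (Real.sinh x / t p), neg_abs_le (Qre p v),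
              le_abs_self (Real.sinh x / t p), le_abs_self (Qre p v)]
      _ = (|Real.sinh x| / t p) * |Qre p v| := by rw [abs_mul, abs_div, abs_of_pos hu]
      _ ≤ (|Real.sinh x| / t p) * (t p * A p v) := by
            apply mul_le_mul_of_nonneg_left (hQbound p v) (by positivity)
      _ = |Real.sinh x| * A p v := by field_simp
    have h2 : Iq p v ≤ (Real.cosh x + |Real.sinh x|) * A p v := by
      rw [hrep p v]
      have := h1
      nlinarith
    have h3 : (Real.cosh x + |Real.sinh x|) * A p v ≤ 2 * Real.cosh B * A p v := by
      apply mul_le_mul_of_nonneg_right _ (hApos p v)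
      linarith
    have hcB : Real.cosh B = c₂ * s₀ := by rw [hc₂def]; field_simp
    have h5 : c₂ * s₀ * A p v ≤ c₂ * t p * A p v :=
      mul_le_mul_of_nonneg_right (mul_le_mul_of_nonneg_left (hts p) hc₂pos.le) (hApos p v)
    rw [hg₀ p v]
    calc Iq p v ≤ (Real.cosh x + |Real.sinh x|) * A p v := h2
    _ ≤ 2 * Real.cosh B * A p v := h3
    _ = 2 * (c₂ * s₀ * A p v) := by rw [hcB]; ring
    _ ≤ 2 * (c₂ * t p * A p v) := by linarith
    _ = 2 * c₂ * (t p * A p v) := by ring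
  refine ⟨⟨c₂, hc₂pos, hmain⟩, ?_⟩
  -- completeness transfer
  have hkey := hcompat (2 * c₂) (by positivity) hmain
  have hK : (0 : ℝ) < Real.sqrt (2 * c₂) := Real.sqrt_pos.mpr (by positivity)
  constructor
  intro l hl
  have hc := (@Metric.cauchy_iff M mg.toPseudoMetricSpace l).mp hl
  have hCauchyI : @Cauchy M mI.toUniformSpace l := by
    refine (@Metric.cauchy_iff M mI.toPseudoMetricSpace l).mpr ⟨hc.1, fun ε hε => ?_⟩
    obtain ⟨s, hs, hball⟩ := hc.2 (ε / Real.sqrt (2 * c₂)) (div_pos hε hK)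
    refine ⟨s, hs, fun x hx y hy => ?_⟩
    calc mI.toDist.dist x y ≤ Real.sqrt (2 * c₂) * mg.toDist.dist x y := hkey x y
    _ < Real.sqrt (2 * c₂) * (ε / Real.sqrt (2 * c₂)) := by
        exact mul_lt_mul_of_pos_left (hball x hx y hy) hK
    _ = ε := by field_simp
  obtain ⟨x, hx⟩ := @CompleteSpace.complete M mI.toUniformSpace hIcomplete l hCauchyI
  exact ⟨x, htop ▸ hx⟩
end
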